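/- arXiv:1301.1802 — 5 statements merged into one kernel-verified Lean document; each statement's English description precedes it below -/
import Mathlib

section
/- If two Bessel sequences {g_{k,l}} and {γ_{k,l}} in a Hilbert space satisfy ‖I − S_{g,γ}‖ < 1 where S_{g,γ} f = Σ_{k,l} ⟨f, g_{k,l}⟩ γ_{k,l}, then each of the two sequences is a frame. -/
open scoped ENNReal ComplexInnerProductSpace

noncomputable section

open MeasureTheory

/-- Cauchy–Schwarz for `ℝ≥0∞`-valued tsums. -/
lemma stmt9_cs_tsum {ι : Type*} (u v : ι → ℝ≥0∞) :
    (∑' j, u j * v j) ^ 2 ≤ (∑' j, u j ^ 2) * (∑' j, v j ^ 2) := by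
  letI : MeasurableSpace ι := ⊤
  haveI : MeasurableSingletonClass ι := ⟨fun _ => trivial⟩
  have hpq : Real.HolderConjugate 2 2 := ⟨by norm_num, by norm_num, by norm_num⟩
  have h := ENNReal.lintegral_mul_le_Lp_mul_Lq (Measure.count (α := ι))
    hpq (f := u) (g := v)
    (Measurable.aemeasurable (fun _ _ => trivial)) (Measurable.aemeasurable (fun _ _ => trivial))
  simp only [Pi.mul_apply, lintegral_count, ENNReal.rpow_two] at h
  calc (∑' j, u j * v j) ^ 2 ≤ (((∑' j, u j ^ 2) ^ (1/2:ℝ)) * ((∑' j, v j ^ 2) ^ (1/2:ℝ))) ^ 2 :=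
        pow_le_pow_left' h 2
    _ = (∑' j, u j ^ 2) * (∑' j, v j ^ 2) := by
        rw [mul_pow, ← ENNReal.rpow_two (_ ^ (1/2:ℝ)), ← ENNReal.rpow_two (_ ^ (1/2:ℝ)),
          ← ENNReal.rpow_mul, ← ENNReal.rpow_mul]
        norm_num

lemma stmt9_enorm_tsum_le {ι : Type*} (c : ι → ℂ) :
    (‖∑' j, c j‖₊ : ℝ≥0∞) ≤ ∑' j, (‖c j‖₊ : ℝ≥0∞) := by
  by_cases h : (∑' j, (‖c j‖₊ : ℝ≥0∞)) = ∞
  · exact h ▸ le_top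
  · have hs : Summable fun j => ‖c j‖₊ := ENNReal.tsum_coe_ne_top_iff_summable.mp h
    rw [← ENNReal.coe_tsum hs]
    exact_mod_cast nnnorm_tsum_le hs

lemma stmt9_enorm_tsum_mul_le {ι : Type*} (p q : ι → ℂ) :
    (‖∑' j, p j * q j‖₊ : ℝ≥0∞) ≤ ∑' j, (‖p j‖₊ : ℝ≥0∞) * (‖q j‖₊ : ℝ≥0∞) := by
  refine (stmt9_enorm_tsum_le _).trans (le_of_eq (tsum_congr fun j => ?_))
  rw [nnnorm_mul, ENNReal.coe_mul]

lemma stmt9_main_est {ι : Type*} (x : ℝ≥0∞) (u v : ι → ℝ≥0∞) (Bb : ℝ)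
    (h1 : x ^ 2 ≤ ∑' j, u j * v j)
    (h2 : ∑' j, v j ^ 2 ≤ ENNReal.ofReal Bb * x ^ 2)
    (hx : x ≠ ∞) :
    x ^ 2 ≤ ENNReal.ofReal Bb * ∑' j, u j ^ 2 := by
  rcases eq_or_ne x 0 with rfl | hx0
  · simp
  have h4 : x ^ 2 * x ^ 2 ≤ (ENNReal.ofReal Bb * ∑' j, u j ^ 2) * x ^ 2 := by
    calc x ^ 2 * x ^ 2 = (x ^ 2) ^ 2 := (sq (x^2)).symm
      _ ≤ (∑' j, u j * v j) ^ 2 := pow_le_pow_left' h1 2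
      _ ≤ (∑' j, u j ^ 2) * (∑' j, v j ^ 2) := stmt9_cs_tsum u v
      _ ≤ (∑' j, u j ^ 2) * (ENNReal.ofReal Bb * x ^ 2) := mul_le_mul_right h2 _
      _ = (ENNReal.ofReal Bb * ∑' j, u j ^ 2) * x ^ 2 := by ring
  exact (ENNReal.mul_le_mul_iff_left (by positivity) (ENNReal.pow_ne_top hx)).mp h4

/-- From a lower norm bound for `T` and the key estimate, deduce a lower frame bound. -/
lemma stmt9_frame_lower {H : Type*} [NormedAddCommGroup H] [InnerProductSpace ℂ H]
    {ι : Type*} (a : ι → H) (T : H →L[ℂ] H) (c Bb : ℝ) (hc : 0 < c) (hBb : 0 < Bb)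
    (hTlow : ∀ f : H, c * ‖f‖ ≤ ‖T f‖)
    (hkey : ∀ f : H, (‖T f‖₊ : ℝ≥0∞) ^ 2 ≤
      ENNReal.ofReal Bb * ∑' j, (‖(⟪f, a j⟫ : ℂ)‖₊ : ℝ≥0∞) ^ 2) :
    ∀ f : H, ENNReal.ofReal (c ^ 2 / Bb) * (‖f‖₊ : ℝ≥0∞) ^ 2 ≤
      ∑' j, (‖(⟪f, a j⟫ : ℂ)‖₊ : ℝ≥0∞) ^ 2 := by
  intro f
  have hlow : ENNReal.ofReal (c ^ 2) * (‖f‖₊ : ℝ≥0∞) ^ 2 ≤ (‖T f‖₊ : ℝ≥0∞) ^ 2 := by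
    have hr : c ^ 2 * ‖f‖ ^ 2 ≤ ‖T f‖ ^ 2 := by
      have h := pow_le_pow_left₀ (by positivity) (hTlow f) 2
      calc c ^ 2 * ‖f‖ ^ 2 = (c * ‖f‖) ^ 2 := by ring
        _ ≤ ‖T f‖ ^ 2 := h
    calc ENNReal.ofReal (c ^ 2) * (‖f‖₊ : ℝ≥0∞) ^ 2
        = ENNReal.ofReal (c ^ 2 * ‖f‖ ^ 2) := by
          rw [ENNReal.ofReal_mul (by positivity), ENNReal.ofReal_pow (norm_nonneg f),
            ofReal_norm, enorm_eq_nnnorm]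
      _ ≤ ENNReal.ofReal (‖T f‖ ^ 2) := ENNReal.ofReal_le_ofReal hr
      _ = (‖T f‖₊ : ℝ≥0∞) ^ 2 := by
          rw [ENNReal.ofReal_pow (norm_nonneg _), ofReal_norm, enorm_eq_nnnorm]
  rw [ENNReal.ofReal_div_of_pos hBb, div_eq_mul_inv, mul_right_comm, ← div_eq_mul_inv,
    ENNReal.div_le_iff_le_mul (Or.inl (ENNReal.ofReal_pos.mpr hBb).ne') (Or.inl ENNReal.ofReal_ne_top)]
  calc ENNReal.ofReal (c ^ 2) * (‖f‖₊ : ℝ≥0∞) ^ 2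
      ≤ (‖T f‖₊ : ℝ≥0∞) ^ 2 := hlow
    _ ≤ ENNReal.ofReal Bb * ∑' j, (‖(⟪f, a j⟫ : ℂ)‖₊ : ℝ≥0∞) ^ 2 := hkey f
    _ = (∑' j, (‖(⟪f, a j⟫ : ℂ)‖₊ : ℝ≥0∞) ^ 2) * ENNReal.ofReal Bb := mul_comm _ _

lemma stmt9_nnnorm_inner_symm {H : Type*} [NormedAddCommGroup H] [InnerProductSpace ℂ H]
    (x y : H) : ‖(⟪x, y⟫ : ℂ)‖₊ = ‖(⟪y, x⟫ : ℂ)‖₊ :=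
  NNReal.coe_injective (by simp [coe_nnnorm, norm_inner_symm x y])

lemma stmt9_inner_self_enorm {H : Type*} [NormedAddCommGroup H] [InnerProductSpace ℂ H]
    (x : H) : (‖(⟪x, x⟫ : ℂ)‖₊ : ℝ≥0∞) = (‖x‖₊ : ℝ≥0∞) ^ 2 := by
  have : (⟪x, x⟫ : ℂ) = ((‖x‖ : ℂ)) ^ 2 := inner_self_eq_norm_sq_to_K x
  rw [this]
  congr 1
  simp [nnnorm_pow]

/-- if two Bessel sequences `{g_j}` and `{γ_j}` in a Hilbert space satisfy
`‖I - S_{g,γ}‖ < 1`, where `S_{g,γ} f = Σ_j ⟨f, g_j⟩ γ_j`, then each of them is a frame. -/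
theorem stmt9 {H : Type*} [NormedAddCommGroup H] [InnerProductSpace ℂ H] [CompleteSpace H]
    {ι : Type*} (g γ : ι → H) (Bg Bγ : ℝ)
    (hg : ∀ f : H, ∑' j : ι, (‖(⟪f, g j⟫ : ℂ)‖₊ : ℝ≥0∞) ^ 2 ≤
      ENNReal.ofReal Bg * (‖f‖₊ : ℝ≥0∞) ^ 2)
    (hγ : ∀ f : H, ∑' j : ι, (‖(⟪f, γ j⟫ : ℂ)‖₊ : ℝ≥0∞) ^ 2 ≤
      ENNReal.ofReal Bγ * (‖f‖₊ : ℝ≥0∞) ^ 2)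
    (S : H →L[ℂ] H)
    (hS : ∀ f h : H, (⟪S f, h⟫ : ℂ) = ∑' j : ι, (⟪f, g j⟫ : ℂ) * (⟪γ j, h⟫ : ℂ))
    (hlt : ‖ContinuousLinearMap.id ℂ H - S‖ < 1) :
    (∃ A B : ℝ, 0 < A ∧ ∀ f : H,
        ENNReal.ofReal A * (‖f‖₊ : ℝ≥0∞) ^ 2 ≤ ∑' j : ι, (‖(⟪f, g j⟫ : ℂ)‖₊ : ℝ≥0∞) ^ 2 ∧
        ∑' j : ι, (‖(⟪f, g j⟫ : ℂ)‖₊ : ℝ≥0∞) ^ 2 ≤ ENNReal.ofReal B * (‖f‖₊ : ℝ≥0∞) ^ 2) ∧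
      (∃ A B : ℝ, 0 < A ∧ ∀ f : H,
        ENNReal.ofReal A * (‖f‖₊ : ℝ≥0∞) ^ 2 ≤ ∑' j : ι, (‖(⟪f, γ j⟫ : ℂ)‖₊ : ℝ≥0∞) ^ 2 ∧
        ∑' j : ι, (‖(⟪f, γ j⟫ : ℂ)‖₊ : ℝ≥0∞) ^ 2 ≤ ENNReal.ofReal B * (‖f‖₊ : ℝ≥0∞) ^ 2) := by
  set r : ℝ := ‖ContinuousLinearMap.id ℂ H - S‖ with hr
  have hr0 : 0 ≤ r := norm_nonneg _
  set c : ℝ := 1 - r with hcdef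
  have hc : 0 < c := by simp [hcdef]; linarith
  set Bg' : ℝ := max Bg 1 with hBg'
  set Bγ' : ℝ := max Bγ 1 with hBγ'
  have hBg0 : 0 < Bg' := lt_of_lt_of_le one_pos (le_max_right _ _)
  have hBγ0 : 0 < Bγ' := lt_of_lt_of_le one_pos (le_max_right _ _)
  have hg' : ∀ f : H, ∑' j : ι, (‖(⟪f, g j⟫ : ℂ)‖₊ : ℝ≥0∞) ^ 2 ≤
      ENNReal.ofReal Bg' * (‖f‖₊ : ℝ≥0∞) ^ 2 := fun f =>
    (hg f).trans (mul_le_mul_left (ENNReal.ofReal_le_ofReal (le_max_left _ _)) _)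
  have hγ' : ∀ f : H, ∑' j : ι, (‖(⟪f, γ j⟫ : ℂ)‖₊ : ℝ≥0∞) ^ 2 ≤
      ENNReal.ofReal Bγ' * (‖f‖₊ : ℝ≥0∞) ^ 2 := fun f =>
    (hγ f).trans (mul_le_mul_left (ENNReal.ofReal_le_ofReal (le_max_left _ _)) _)
  -- lower norm bound for S
  have hSlow : ∀ f : H, c * ‖f‖ ≤ ‖S f‖ := by
    intro f
    have h1 : ‖f - S f‖ ≤ r * ‖f‖ := by
      have := (ContinuousLinearMap.id ℂ H - S).le_opNorm f
      simpa using this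
    have h2 : ‖f‖ ≤ ‖f - S f‖ + ‖S f‖ := by
      simpa using norm_add_le (f - S f) (S f)
    simp only [hcdef]; linarith
  -- lower norm bound for S†
  set T : H →L[ℂ] H := ContinuousLinearMap.adjoint S with hT
  have hTnorm : ‖ContinuousLinearMap.id ℂ H - T‖ = r := by
    have h1 : ContinuousLinearMap.adjoint (ContinuousLinearMap.id ℂ H - S)
        = ContinuousLinearMap.id ℂ H - T := by
      rw [map_sub, ContinuousLinearMap.adjoint_id]
    rw [← h1, hr]
    exact (ContinuousLinearMap.adjoint (𝕜 := ℂ) (E := H) (F := H)).norm_map _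
  have hTlow : ∀ f : H, c * ‖f‖ ≤ ‖T f‖ := by
    intro f
    have h1 : ‖f - T f‖ ≤ r * ‖f‖ := by
      have := (ContinuousLinearMap.id ℂ H - T).le_opNorm f
      rw [hTnorm] at this
      simpa using this
    have h2 : ‖f‖ ≤ ‖f - T f‖ + ‖T f‖ := by
      simpa using norm_add_le (f - T f) (T f)
    simp only [hcdef]; linarith
  -- key estimate for g
  have hkeyg : ∀ f : H, (‖S f‖₊ : ℝ≥0∞) ^ 2 ≤
      ENNReal.ofReal Bγ' * ∑' j, (‖(⟪f, g j⟫ : ℂ)‖₊ : ℝ≥0∞) ^ 2 := by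
    intro f
    refine stmt9_main_est _ (fun j => (‖(⟪f, g j⟫ : ℂ)‖₊ : ℝ≥0∞))
      (fun j => (‖(⟪S f, γ j⟫ : ℂ)‖₊ : ℝ≥0∞)) Bγ' ?_ (hγ' (S f)) ENNReal.coe_ne_top
    calc (‖S f‖₊ : ℝ≥0∞) ^ 2 = (‖(⟪S f, S f⟫ : ℂ)‖₊ : ℝ≥0∞) :=
          (stmt9_inner_self_enorm (S f)).symm
      _ = (‖∑' j, (⟪f, g j⟫ : ℂ) * (⟪γ j, S f⟫ : ℂ)‖₊ : ℝ≥0∞) := by rw [hS f (S f)]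
      _ ≤ ∑' j, (‖(⟪f, g j⟫ : ℂ)‖₊ : ℝ≥0∞) * (‖(⟪γ j, S f⟫ : ℂ)‖₊ : ℝ≥0∞) :=
          stmt9_enorm_tsum_mul_le _ _
      _ = ∑' j, (‖(⟪f, g j⟫ : ℂ)‖₊ : ℝ≥0∞) * (‖(⟪S f, γ j⟫ : ℂ)‖₊ : ℝ≥0∞) :=
          tsum_congr fun j => by rw [stmt9_nnnorm_inner_symm (γ j) (S f)]
  -- key estimate for γ
  have hkeyγ : ∀ f : H, (‖T f‖₊ : ℝ≥0∞) ^ 2 ≤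
      ENNReal.ofReal Bg' * ∑' j, (‖(⟪f, γ j⟫ : ℂ)‖₊ : ℝ≥0∞) ^ 2 := by
    intro f
    refine stmt9_main_est _ (fun j => (‖(⟪f, γ j⟫ : ℂ)‖₊ : ℝ≥0∞))
      (fun j => (‖(⟪T f, g j⟫ : ℂ)‖₊ : ℝ≥0∞)) Bg' ?_ (hg' (T f)) ENNReal.coe_ne_top
    calc (‖T f‖₊ : ℝ≥0∞) ^ 2 = (‖(⟪T f, T f⟫ : ℂ)‖₊ : ℝ≥0∞) :=
          (stmt9_inner_self_enorm (T f)).symm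
      _ = (‖(⟪S (T f), f⟫ : ℂ)‖₊ : ℝ≥0∞) := by
          rw [ContinuousLinearMap.adjoint_inner_left, stmt9_nnnorm_inner_symm f (S (T f))]
      _ = (‖∑' j, (⟪T f, g j⟫ : ℂ) * (⟪γ j, f⟫ : ℂ)‖₊ : ℝ≥0∞) := by rw [hS (T f) f]
      _ ≤ ∑' j, (‖(⟪T f, g j⟫ : ℂ)‖₊ : ℝ≥0∞) * (‖(⟪γ j, f⟫ : ℂ)‖₊ : ℝ≥0∞) :=
          stmt9_enorm_tsum_mul_le _ _
      _ = ∑' j, (‖(⟪f, γ j⟫ : ℂ)‖₊ : ℝ≥0∞) * (‖(⟪T f, g j⟫ : ℂ)‖₊ : ℝ≥0∞) :=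
          tsum_congr fun j => by rw [mul_comm, stmt9_nnnorm_inner_symm (γ j) f]
  constructor
  · refine ⟨c ^ 2 / Bγ', Bg', by positivity, fun f => ⟨?_, hg' f⟩⟩
    exact stmt9_frame_lower g S c Bγ' hc hBγ0 hSlow hkeyg f
  · refine ⟨c ^ 2 / Bg', Bγ', by positivity, fun f => ⟨?_, hγ' f⟩⟩
    exact stmt9_frame_lower γ T c Bg' hc hBg0 hTlow hkeyγ f
end
end

section
/- Let 𝒢(g, b) be a Bessel sequence with bound B and 𝒢(h, b) an NSG frame with frame bounds A_h, B_h. Set ψ_k = h_k − g_k and γ¹_{k,l} = S_{h,h}⁻¹ h_{k,l} (the canonical dual of h). Then ‖I − S_{g,γ¹}‖ ≤ A_h^{−1/2} ‖C_ψ‖, where C_ψ is the analysis operator of the system {ψ_{k,l}}. -/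
open MeasureTheory Complex Filter Set Function
open scoped ENNReal Real NNReal ComplexInnerProductSpace

noncomputable section

/-- `L²(ℝ)`. -/
abbrev L2 : Type := MeasureTheory.Lp ℂ 2 (volume : Measure ℝ)

/-- The time-frequency atom `g_{k,l} = M_{b_k l} g_k`. -/
def atom (b : ℤ → ℝ) (g : ℤ → ℝ → ℂ) (k l : ℤ) : ℝ → ℂ :=
  fun t => Complex.exp (2 * (Real.pi : ℂ) * Complex.I * (b k : ℂ) * (l : ℂ) * (t : ℂ)) * g k t

/-- The pairing `⟨f, G⟩ = ∫ f(t) conj(G(t)) dt`. -/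
def pairL2 (f : L2) (G : ℝ → ℂ) : ℂ :=
  ∫ t : ℝ, (f : ℝ → ℂ) t * (starRingEnd ℂ) (G t)

/-- Correlation function `G^{g,γ}_l(t) = Σ_k b_k⁻¹ |g_k(t - l/b_k)| |γ_k(t)|` (in `ℝ≥0∞`). -/
def corr (b : ℤ → ℝ) (g γ : ℤ → ℝ → ℂ) (l : ℤ) (t : ℝ) : ℝ≥0∞ :=
  ∑' k : ℤ, ENNReal.ofReal ((b k)⁻¹) * (‖g k (t - (l : ℝ) / b k)‖₊ : ℝ≥0∞) * (‖γ k t‖₊ : ℝ≥0∞)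

/-- The off-diagonal quantity `R_{g,γ}`. -/
def Roff (b : ℤ → ℝ) (g γ : ℤ → ℝ → ℂ) : ℝ≥0∞ :=
  essSup (fun t => ∑' l : {l : ℤ // l ≠ 0}, corr b g γ (l : ℤ) t) volume

/-- `Σ_{k,l} |⟨f, g_{k,l}⟩|²` (in `ℝ≥0∞`). -/
def besselSum (b : ℤ → ℝ) (g : ℤ → ℝ → ℂ) (f : L2) : ℝ≥0∞ :=
  ∑' k : ℤ, ∑' l : ℤ, (‖pairL2 f (atom b g k l)‖₊ : ℝ≥0∞) ^ 2

/-- `𝒢(g,b)` is a Bessel sequence. -/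
def IsBesselNSG (b : ℤ → ℝ) (g : ℤ → ℝ → ℂ) : Prop :=
  ∃ B : ℝ, ∀ f : L2, besselSum b g f ≤ ENNReal.ofReal B * (‖f‖₊ : ℝ≥0∞) ^ 2

/-- `𝒢(g,b)` is a frame. -/
def IsFrameNSG (b : ℤ → ℝ) (g : ℤ → ℝ → ℂ) : Prop :=
  ∃ A B : ℝ, 0 < A ∧ ∀ f : L2,
    ENNReal.ofReal A * (‖f‖₊ : ℝ≥0∞) ^ 2 ≤ besselSum b g f ∧
    besselSum b g f ≤ ENNReal.ofReal B * (‖f‖₊ : ℝ≥0∞) ^ 2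

/-- `S` is the mixed frame operator `S_{g,γ}` (defined weakly):
`⟨S f, h⟩ = Σ_{k,l} ⟨f, g_{k,l}⟩ ⟨γ_{k,l}, h⟩`. -/
def IsMixedFrameOp (b : ℤ → ℝ) (g γ : ℤ → ℝ → ℂ) (S : L2 →L[ℂ] L2) : Prop :=
  ∀ f h : L2, pairL2 (S f) (h : ℝ → ℂ) =
    ∑' k : ℤ, ∑' l : ℤ, pairL2 f (atom b g k l) * (starRingEnd ℂ) (pairL2 h (atom b γ k l))

/-- `G_0^{g,g}(t) = Σ_k b_k⁻¹ |g_k(t)|²` as a real-valued function. -/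
def G0r (b : ℤ → ℝ) (g : ℤ → ℝ → ℂ) (t : ℝ) : ℝ :=
  ∑' k : ℤ, (b k)⁻¹ * ‖g k t‖ ^ 2

/-- The Wiener amalgam norm `‖g‖_{W(L^∞,ℓ¹)}` (valued in `ℝ≥0∞`). -/
def wienerNorm (g : ℝ → ℂ) : ℝ≥0∞ :=
  ∑' k : ℤ, essSup (fun t => (‖g (t + (k : ℝ))‖₊ : ℝ≥0∞)) (volume.restrict (Set.Icc (0:ℝ) 1))

/-- `ℓ²(ℤ×ℤ)`, the space of NSG coefficient sequences. -/
abbrev l2Z : Type := lp (fun _ : ℤ × ℤ => ℂ) 2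

/-- `C` is the analysis operator of the NSG system `𝒢(g,b)`. -/
def IsAnalysisOp (b : ℤ → ℝ) (g : ℤ → ℝ → ℂ) (C : L2 →L[ℂ] l2Z) : Prop :=
  ∀ f : L2, ∀ p : ℤ × ℤ, (C f : ∀ _ : ℤ × ℤ, ℂ) p = pairL2 f (atom b g p.1 p.2)

/-- if `𝒢(g,b)` is Bessel with bound `B` and `𝒢(h,b)` is an NSG frame with
bounds `A_h, B_h`, `ψ_k = h_k - g_k`, and `γ¹_{k,l} = S_{h,h}⁻¹ h_{k,l}`, then
`‖I - S_{g,γ¹}‖ ≤ A_h^{-1/2} ‖C_ψ‖`.  Here `S_{h,h} = C_h* C_h`, `S_{g,γ¹} = S_{h,h}⁻¹ C_h* C_g`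
and `C_ψ = C_h - C_g`. -/
theorem stmt10 (b : ℤ → ℝ) (bL bU : ℝ) (hbL : 0 < bL) (hb : ∀ k, b k ∈ Set.Icc bL bU)
    (g h : ℤ → ℝ → ℂ) (B Ah Bh : ℝ) (hAh : 0 < Ah)
    (Cg Ch : L2 →L[ℂ] l2Z) (hCg : IsAnalysisOp b g Cg) (hCh : IsAnalysisOp b h Ch)
    (hBessel : ∀ f : L2, ‖Cg f‖ ^ 2 ≤ B * ‖f‖ ^ 2)
    (hFrame : ∀ f : L2, Ah * ‖f‖ ^ 2 ≤ ‖Ch f‖ ^ 2 ∧ ‖Ch f‖ ^ 2 ≤ Bh * ‖f‖ ^ 2)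
    (Sinv : L2 →L[ℂ] L2)
    (hinv1 : Sinv.comp ((ContinuousLinearMap.adjoint Ch).comp Ch) = ContinuousLinearMap.id ℂ L2)
    (hinv2 : ((ContinuousLinearMap.adjoint Ch).comp Ch).comp Sinv = ContinuousLinearMap.id ℂ L2) :
    ‖ContinuousLinearMap.id ℂ L2 -
        Sinv.comp ((ContinuousLinearMap.adjoint Ch).comp Cg)‖ ≤
      (Real.sqrt Ah)⁻¹ * ‖Ch - Cg‖ := by
  have hsq : (0:ℝ) < Real.sqrt Ah := Real.sqrt_pos.mpr hAh
  -- key bound on T = Sinv ∘ Ch*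
  have key : ∀ x : l2Z, ‖Sinv ((ContinuousLinearMap.adjoint Ch) x)‖ ≤ (Real.sqrt Ah)⁻¹ * ‖x‖ := by
    intro x
    set u := Sinv ((ContinuousLinearMap.adjoint Ch) x) with hu
    have hSu : (ContinuousLinearMap.adjoint Ch) (Ch u) = (ContinuousLinearMap.adjoint Ch) x := by
      have := congrArg (fun T : L2 →L[ℂ] L2 => T ((ContinuousLinearMap.adjoint Ch) x)) hinv2
      simpa [ContinuousLinearMap.comp_apply, hu] using this
    have hChu2 : ‖Ch u‖ ^ 2 ≤ ‖x‖ * ‖Ch u‖ := by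
      have h1 : (⟪Ch u, Ch u⟫) = ⟪x, Ch u⟫ := by
        calc (⟪Ch u, Ch u⟫) = ⟪(ContinuousLinearMap.adjoint Ch) (Ch u), u⟫ := by
              rw [ContinuousLinearMap.adjoint_inner_left]
          _ = ⟪(ContinuousLinearMap.adjoint Ch) x, u⟫ := by rw [hSu]
          _ = ⟪x, Ch u⟫ := by rw [ContinuousLinearMap.adjoint_inner_left]
      have h2 : (‖Ch u‖:ℝ) ^ 2 = RCLike.re (⟪Ch u, Ch u⟫) := by
        rw [← inner_self_eq_norm_sq (𝕜 := ℂ)]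
      have h3 : RCLike.re (⟪x, Ch u⟫) ≤ ‖x‖ * ‖Ch u‖ := by
        calc RCLike.re (⟪x, Ch u⟫) ≤ ‖(⟪x, Ch u⟫)‖ := RCLike.re_le_norm _
          _ ≤ ‖x‖ * ‖Ch u‖ := norm_inner_le_norm _ _
      rw [h2, h1]; exact h3
    have hChu : ‖Ch u‖ ≤ ‖x‖ := by
      rcases eq_or_lt_of_le (norm_nonneg (Ch u)) with h0 | h0
      · rw [← h0]; exact norm_nonneg x
      · nlinarith [hChu2]
    have hAu : Ah * ‖u‖ ^ 2 ≤ ‖x‖ ^ 2 := by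
      have := (hFrame u).1
      nlinarith [norm_nonneg (Ch u), norm_nonneg x]
    have : Real.sqrt Ah * ‖u‖ ≤ ‖x‖ := by
      have hn : 0 ≤ Real.sqrt Ah * ‖u‖ := by positivity
      have hsqAh : Real.sqrt Ah ^ 2 = Ah := Real.sq_sqrt hAh.le
      nlinarith [norm_nonneg x, norm_nonneg u]
    calc ‖u‖ = (Real.sqrt Ah)⁻¹ * (Real.sqrt Ah * ‖u‖) := by
          field_simp
      _ ≤ (Real.sqrt Ah)⁻¹ * ‖x‖ := by
          apply mul_le_mul_of_nonneg_left this (by positivity)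
  -- rewrite the operator
  have hop : ContinuousLinearMap.id ℂ L2 -
      Sinv.comp ((ContinuousLinearMap.adjoint Ch).comp Cg) =
      (Sinv.comp (ContinuousLinearMap.adjoint Ch)).comp (Ch - Cg) := by
    ext f
    have hid : Sinv ((ContinuousLinearMap.adjoint Ch) (Ch f)) = f := by
      have := congrArg (fun T : L2 →L[ℂ] L2 => T f) hinv1
      simpa [ContinuousLinearMap.comp_apply] using this
    simp [ContinuousLinearMap.comp_apply, ContinuousLinearMap.sub_apply, map_sub, hid]
  rw [hop]
  apply ContinuousLinearMap.opNorm_le_bound _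
      (mul_nonneg (inv_nonneg.mpr hsq.le) (norm_nonneg _))
  intro f
  simp only [ContinuousLinearMap.comp_apply]
  calc ‖Sinv ((ContinuousLinearMap.adjoint Ch) ((Ch - Cg) f))‖
      ≤ (Real.sqrt Ah)⁻¹ * ‖(Ch - Cg) f‖ := key _
    _ ≤ (Real.sqrt Ah)⁻¹ * (‖Ch - Cg‖ * ‖f‖) :=
        mul_le_mul_of_nonneg_left ((Ch - Cg).le_opNorm f) (inv_nonneg.mpr hsq.le)
    _ = (Real.sqrt Ah)⁻¹ * ‖Ch - Cg‖ * ‖f‖ := (mul_assoc _ _ _).symm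
end
end

section
/- Let 𝒢(g, b) be a Bessel sequence with bound B and 𝒢(h, b) an NSG frame with bounds A_h, B_h; set ψ_k = h_k − g_k and γ²_{k,l} = S_{h,h}⁻¹ g_{k,l}. Then ‖I − S_{g,γ²}‖ ≤ A_h⁻¹ (√B_h + √B) ‖C_ψ‖. -/
open MeasureTheory Complex Filter Set Function
open scoped ENNReal Real NNReal ComplexInnerProductSpace

noncomputable section

set_option maxHeartbeats 1600000 in
/-- with `γ²_{k,l} = S_{h,h}⁻¹ g_{k,l}` (so `S_{g,γ²} = S_{h,h}⁻¹ C_g* C_g`),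
one has `‖I - S_{g,γ²}‖ ≤ A_h⁻¹ (√B_h + √B) ‖C_ψ‖` where `C_ψ = C_h - C_g`. -/
theorem stmt12 (b : ℤ → ℝ) (bL bU : ℝ) (hbL : 0 < bL) (hb : ∀ k, b k ∈ Set.Icc bL bU)
    (g h : ℤ → ℝ → ℂ) (B Ah Bh : ℝ) (hAh : 0 < Ah)
    (Cg Ch : L2 →L[ℂ] l2Z) (hCg : IsAnalysisOp b g Cg) (hCh : IsAnalysisOp b h Ch)
    (hBessel : ∀ f : L2, ‖Cg f‖ ^ 2 ≤ B * ‖f‖ ^ 2)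
    (hFrame : ∀ f : L2, Ah * ‖f‖ ^ 2 ≤ ‖Ch f‖ ^ 2 ∧ ‖Ch f‖ ^ 2 ≤ Bh * ‖f‖ ^ 2)
    (Sinv : L2 →L[ℂ] L2)
    (hinv1 : Sinv.comp ((ContinuousLinearMap.adjoint Ch).comp Ch) = ContinuousLinearMap.id ℂ L2)
    (hinv2 : ((ContinuousLinearMap.adjoint Ch).comp Ch).comp Sinv = ContinuousLinearMap.id ℂ L2) :
    ‖ContinuousLinearMap.id ℂ L2 -
        Sinv.comp ((ContinuousLinearMap.adjoint Cg).comp Cg)‖ ≤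
      Ah⁻¹ * (Real.sqrt Bh + Real.sqrt B) * ‖Ch - Cg‖ := by
  classical
  set D : L2 →L[ℂ] l2Z := Ch - Cg with hD
  -- norm bounds on Ch and Cg
  have hChn : ‖Ch‖ ≤ Real.sqrt Bh := by
    refine ContinuousLinearMap.opNorm_le_bound _ (Real.sqrt_nonneg _) fun f => ?_
    have h2 := (hFrame f).2
    calc ‖Ch f‖ = Real.sqrt (‖Ch f‖ ^ 2) := by
          rw [Real.sqrt_sq (norm_nonneg _)]
      _ ≤ Real.sqrt (Bh * ‖f‖ ^ 2) := Real.sqrt_le_sqrt h2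
      _ = Real.sqrt Bh * ‖f‖ := by
          rw [Real.sqrt_mul' _ (sq_nonneg _), Real.sqrt_sq (norm_nonneg _)]
  have hCgn : ‖Cg‖ ≤ Real.sqrt B := by
    refine ContinuousLinearMap.opNorm_le_bound _ (Real.sqrt_nonneg _) fun f => ?_
    calc ‖Cg f‖ = Real.sqrt (‖Cg f‖ ^ 2) := by
          rw [Real.sqrt_sq (norm_nonneg _)]
      _ ≤ Real.sqrt (B * ‖f‖ ^ 2) := Real.sqrt_le_sqrt (hBessel f)
      _ = Real.sqrt B * ‖f‖ := by
          rw [Real.sqrt_mul' _ (sq_nonneg _), Real.sqrt_sq (norm_nonneg _)]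
  -- norm bound on Sinv
  have hSinv : ‖Sinv‖ ≤ Ah⁻¹ := by
    refine ContinuousLinearMap.opNorm_le_bound _ (by positivity) fun y => ?_
    set f : L2 := Sinv y with hf
    have hyf : (ContinuousLinearMap.adjoint Ch) (Ch f) = y := by
      have := congrArg (fun T => T y) hinv2
      simpa [ContinuousLinearMap.comp_apply] using this
    have hkey : Ah * ‖f‖ ^ 2 ≤ ‖y‖ * ‖f‖ := by
      have h1 := (hFrame f).1
      have h2 : (‖Ch f‖ : ℝ) ^ 2 = RCLike.re (⟪y, f⟫) := by
        rw [← hyf, ContinuousLinearMap.adjoint_inner_left]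
        exact (inner_self_eq_norm_sq (Ch f)).symm
      have h3 : RCLike.re (⟪y, f⟫) ≤ ‖y‖ * ‖f‖ := by
        have h4 : |RCLike.re (⟪y, f⟫)| ≤ ‖(⟪y, f⟫)‖ := RCLike.abs_re_le_norm _
        have h5 : ‖(⟪y, f⟫)‖ ≤ ‖y‖ * ‖f‖ := norm_inner_le_norm _ _
        calc RCLike.re (⟪y, f⟫) ≤ |RCLike.re (⟪y, f⟫)| := le_abs_self _
          _ ≤ ‖y‖ * ‖f‖ := h4.trans h5
      linarith
    rcases eq_or_lt_of_le (norm_nonneg f) with hf0 | hf0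
    · rw [← hf0]
      positivity
    · have h6 : Ah * ‖f‖ ≤ ‖y‖ := by
        have := le_of_mul_le_mul_right (by nlinarith [hkey] : Ah * ‖f‖ * ‖f‖ ≤ ‖y‖ * ‖f‖) hf0
        linarith
      calc ‖f‖ = Ah⁻¹ * (Ah * ‖f‖) := by field_simp
        _ ≤ Ah⁻¹ * ‖y‖ := mul_le_mul_of_nonneg_left h6 (by positivity)
  -- key algebraic identity
  have key : ContinuousLinearMap.id ℂ L2 -
      Sinv.comp ((ContinuousLinearMap.adjoint Cg).comp Cg) =
      Sinv.comp ((ContinuousLinearMap.adjoint Ch).comp D +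
        (ContinuousLinearMap.adjoint D).comp Cg) := by
    have e1 : (ContinuousLinearMap.adjoint Ch).comp D +
        (ContinuousLinearMap.adjoint D).comp Cg =
        (ContinuousLinearMap.adjoint Ch).comp Ch -
          (ContinuousLinearMap.adjoint Cg).comp Cg := by
      rw [hD, map_sub, ContinuousLinearMap.comp_sub, ContinuousLinearMap.sub_comp]
      abel
    rw [e1, ContinuousLinearMap.comp_sub, hinv1]
  rw [key]
  have hDn : ‖(ContinuousLinearMap.adjoint Ch).comp D +
      (ContinuousLinearMap.adjoint D).comp Cg‖ ≤ (Real.sqrt Bh + Real.sqrt B) * ‖D‖ := by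
    have hadjCh : ‖ContinuousLinearMap.adjoint Ch‖ = ‖Ch‖ :=
      LinearIsometryEquiv.norm_map ContinuousLinearMap.adjoint Ch
    have hadjD : ‖ContinuousLinearMap.adjoint D‖ = ‖D‖ :=
      LinearIsometryEquiv.norm_map ContinuousLinearMap.adjoint D
    calc ‖(ContinuousLinearMap.adjoint Ch).comp D +
        (ContinuousLinearMap.adjoint D).comp Cg‖
        ≤ ‖(ContinuousLinearMap.adjoint Ch).comp D‖ +
          ‖(ContinuousLinearMap.adjoint D).comp Cg‖ := norm_add_le _ _
      _ ≤ ‖ContinuousLinearMap.adjoint Ch‖ * ‖D‖ +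
          ‖ContinuousLinearMap.adjoint D‖ * ‖Cg‖ := by
          gcongr <;> exact ContinuousLinearMap.opNorm_comp_le _ _
      _ ≤ Real.sqrt Bh * ‖D‖ + ‖D‖ * Real.sqrt B := by
          rw [hadjCh, hadjD]
          gcongr
      _ = (Real.sqrt Bh + Real.sqrt B) * ‖D‖ := by ring
  calc ‖Sinv.comp ((ContinuousLinearMap.adjoint Ch).comp D +
      (ContinuousLinearMap.adjoint D).comp Cg)‖
      ≤ ‖Sinv‖ * ‖(ContinuousLinearMap.adjoint Ch).comp D +
        (ContinuousLinearMap.adjoint D).comp Cg‖ := ContinuousLinearMap.opNorm_comp_le _ _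
    _ ≤ Ah⁻¹ * ((Real.sqrt Bh + Real.sqrt B) * ‖D‖) := by
        gcongr
    _ = Ah⁻¹ * (Real.sqrt Bh + Real.sqrt B) * ‖D‖ := by ring
end
end

section
/- In the painless case (|supp g_k| ≤ 1/b_k, A ≤ G^{g,g}_0 ≤ B a.e.), the canonical dual frame elements are γ_{k,l} = M_{l b_k} ((G^{g,g}_0)⁻¹ g_k); i.e., the canonical dual of a painless NSG frame is again an NSG frame with windows (G^{g,g}_0)⁻¹ g_k. -/
open MeasureTheory Complex Filter Set Function
open scoped ENNReal Real NNReal ComplexInnerProductSpace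

noncomputable section

lemma liftIoc_sm {T : ℝ} [hT : Fact (0 < T)] (c : ℝ) (F : ℝ → ℂ) (hFm : StronglyMeasurable F) :
    StronglyMeasurable (AddCircle.liftIoc T c F) := by
  have : AddCircle.liftIoc T c F =
      (fun x : Ioc c (c + T) => F x) ∘ (AddCircle.measurableEquivIoc T c) := rfl
  rw [this]
  exact (hFm.comp_measurable measurable_subtype_coe).comp_measurable
    (AddCircle.measurableEquivIoc T c).measurable

lemma liftIoc_memLp {T : ℝ} [hT : Fact (0 < T)] (c : ℝ) (F : ℝ → ℂ)
    (hFm : StronglyMeasurable F) (hF2 : MemLp F 2 (volume : Measure ℝ)) :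
    MemLp (AddCircle.liftIoc T c F) 2 (@AddCircle.haarAddCircle T hT) := by
  have hmap : Measure.map ((↑) : ℝ → AddCircle T) (volume.restrict (Ioc c (c + T)))
      = (volume : Measure (AddCircle T)) := (AddCircle.measurePreserving_mk T c).map_eq
  have hvol : MemLp (AddCircle.liftIoc T c F) 2 (volume : Measure (AddCircle T)) := by
    rw [← hmap]
    rw [memLp_map_measure_iff ((liftIoc_sm c F hFm).aestronglyMeasurable)
      AddCircle.measurable_mk'.aemeasurable]
    refine (hF2.restrict _).ae_eq ?_
    filter_upwards [ae_restrict_mem measurableSet_Ioc] with x hx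
    exact (AddCircle.liftIoc_coe_apply hx).symm
  have : (@AddCircle.haarAddCircle T hT) = (ENNReal.ofReal T)⁻¹ • (volume : Measure (AddCircle T)) := by
    rw [AddCircle.volume_eq_smul_haarAddCircle, smul_smul,
      ENNReal.inv_mul_cancel (by simp [hT.out]) ENNReal.ofReal_ne_top, one_smul]
  rw [this]
  exact hvol.smul_measure (ENNReal.inv_ne_top.mpr (by simp [hT.out]))

lemma fourierCoeff_liftIoc {T : ℝ} [hT : Fact (0 < T)] (c : ℝ) (F : ℝ → ℂ)
    (hFs : ∀ t, t ∉ Ioc c (c + T) → F t = 0) (l : ℤ) :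
    fourierCoeff (AddCircle.liftIoc T c F) l =
      (T : ℂ)⁻¹ * ∫ t : ℝ, F t * Complex.exp (2 * (Real.pi : ℂ) * Complex.I * (-l : ℤ) * t / T) := by
  rw [fourierCoeff_eq_intervalIntegral _ l c]
  have h1 : ∫ x in c..(c + T), fourier (-l) (x : AddCircle T) • AddCircle.liftIoc T c F x
      = ∫ x in Ioc c (c + T), fourier (-l) (x : AddCircle T) • AddCircle.liftIoc T c F x := by
    rw [intervalIntegral.integral_of_le (by linarith [hT.out])]
  have h2 : ∫ x in Ioc c (c + T), fourier (-l) (x : AddCircle T) • AddCircle.liftIoc T c F x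
      = ∫ x in Ioc c (c + T),
          F x * Complex.exp (2 * (Real.pi : ℂ) * Complex.I * (-l : ℤ) * x / T) := by
    refine setIntegral_congr_fun measurableSet_Ioc (fun x hx => ?_)
    rw [AddCircle.liftIoc_coe_apply hx, fourier_coe_apply, smul_eq_mul, mul_comm]
  have h3 : ∫ x in Ioc c (c + T),
          F x * Complex.exp (2 * (Real.pi : ℂ) * Complex.I * (-l : ℤ) * x / T)
      = ∫ x : ℝ, F x * Complex.exp (2 * (Real.pi : ℂ) * Complex.I * (-l : ℤ) * x / T) := by
    refine setIntegral_eq_integral_of_forall_compl_eq_zero (fun x hx => ?_)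
    rw [hFs x hx, zero_mul]
  rw [h1, h2, h3, Complex.real_smul]
  push_cast
  ring

lemma parseval_circle {T : ℝ} (hT : 0 < T) (c : ℝ) (F H : ℝ → ℂ)
    (hFm : StronglyMeasurable F) (hHm : StronglyMeasurable H)
    (hF2 : MemLp F 2 (volume : Measure ℝ)) (hH2 : MemLp H 2 (volume : Measure ℝ))
    (hFs : ∀ t, t ∉ Ioc c (c + T) → F t = 0) (hHs : ∀ t, t ∉ Ioc c (c + T) → H t = 0) :
    ∑' l : ℤ,
      (∫ t : ℝ, F t * Complex.exp (2 * (Real.pi : ℂ) * Complex.I * (-l : ℤ) * t / T)) *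
        (starRingEnd ℂ)
          (∫ t : ℝ, H t * Complex.exp (2 * (Real.pi : ℂ) * Complex.I * (-l : ℤ) * t / T)) =
      (T : ℂ) * ∫ t : ℝ, F t * (starRingEnd ℂ) (H t) := by
  haveI : Fact (0 < T) := ⟨hT⟩
  have hTC : (T : ℂ) ≠ 0 := by exact_mod_cast hT.ne'
  set FL := (liftIoc_memLp c F hFm hF2).toLp (AddCircle.liftIoc T c F) with hFL
  set HL := (liftIoc_memLp c H hHm hH2).toLp (AddCircle.liftIoc T c H) with hHL
  -- Fourier coefficients of the Lp lifts
  have hcF : ∀ l : ℤ, fourierCoeff (FL : AddCircle T → ℂ) l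
      = fourierCoeff (AddCircle.liftIoc T c F) l := by
    intro l
    refine integral_congr_ae ?_
    filter_upwards [(liftIoc_memLp c F hFm hF2).coeFn_toLp] with z hz
    rw [hz]
  have hcH : ∀ l : ℤ, fourierCoeff (HL : AddCircle T → ℂ) l
      = fourierCoeff (AddCircle.liftIoc T c H) l := by
    intro l
    refine integral_congr_ae ?_
    filter_upwards [(liftIoc_memLp c H hHm hH2).coeFn_toLp] with z hz
    rw [hz]
  -- inner product identity
  have hinner : (inner ℂ HL FL : ℂ) = (T : ℂ)⁻¹ * ∫ t : ℝ, F t * (starRingEnd ℂ) (H t) := by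
    rw [MeasureTheory.L2.inner_def]
    have h1 : ∫ z, (inner ℂ ((HL : AddCircle T → ℂ) z) ((FL : AddCircle T → ℂ) z) : ℂ)
          ∂(@AddCircle.haarAddCircle T _)
        = ∫ z, (starRingEnd ℂ) (AddCircle.liftIoc T c H z) * (AddCircle.liftIoc T c F z)
          ∂(@AddCircle.haarAddCircle T _) := by
      refine integral_congr_ae ?_
      filter_upwards [(liftIoc_memLp c F hFm hF2).coeFn_toLp,
        (liftIoc_memLp c H hHm hH2).coeFn_toLp] with z h1 h2
      rw [h1, h2, RCLike.inner_apply]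
      ring
    have h2 : ∫ z, (starRingEnd ℂ) (AddCircle.liftIoc T c H z) * (AddCircle.liftIoc T c F z)
          ∂(volume : Measure (AddCircle T))
        = ∫ t in Ioc c (c + T), (starRingEnd ℂ) (H t) * F t := by
      rw [← AddCircle.integral_preimage T c]
      refine setIntegral_congr_fun measurableSet_Ioc (fun x hx => ?_)
      rw [AddCircle.liftIoc_coe_apply hx, AddCircle.liftIoc_coe_apply hx]
    have h3 : ∫ t in Ioc c (c + T), (starRingEnd ℂ) (H t) * F t
        = ∫ t : ℝ, F t * (starRingEnd ℂ) (H t) := by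
      rw [show (fun t => (starRingEnd ℂ) (H t) * F t) = fun t => F t * (starRingEnd ℂ) (H t)
        from funext fun t => mul_comm _ _]
      exact setIntegral_eq_integral_of_forall_compl_eq_zero (fun x hx => by
        rw [hFs x hx, zero_mul])
    have h4 : ∫ z, (starRingEnd ℂ) (AddCircle.liftIoc T c H z) * (AddCircle.liftIoc T c F z)
          ∂(volume : Measure (AddCircle T))
        = T * ∫ z, (starRingEnd ℂ) (AddCircle.liftIoc T c H z) * (AddCircle.liftIoc T c F z)
          ∂(@AddCircle.haarAddCircle T _) := by
      rw [AddCircle.volume_eq_smul_haarAddCircle, integral_smul_measure,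
        ENNReal.toReal_ofReal hT.le, Complex.real_smul]
    rw [h1]
    have := h4.symm.trans (h2.trans h3)
    rw [← this]
    field_simp
  -- Parseval
  have hsum := fourierBasis.tsum_inner_mul_inner HL FL
  have hb : ∀ (u : Lp ℂ 2 (@AddCircle.haarAddCircle T _)) (l : ℤ),
      (inner ℂ ((fourierBasis : HilbertBasis ℤ ℂ _) l) u : ℂ) = fourierCoeff (u : AddCircle T → ℂ) l := by
    intro u l
    rw [← fourierBasis_repr]
    exact (fourierBasis.repr_apply_apply u l).symm
  have key : ∑' l : ℤ, (starRingEnd ℂ) (fourierCoeff (AddCircle.liftIoc T c H) l) *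
      fourierCoeff (AddCircle.liftIoc T c F) l
      = (T : ℂ)⁻¹ * ∫ t : ℝ, F t * (starRingEnd ℂ) (H t) := by
    rw [← hinner, ← hsum]
    refine tsum_congr (fun l => ?_)
    rw [← inner_conj_symm HL, hb HL l, hb FL l, hcF, hcH]
  -- rewrite goal using fourierCoeff_liftIoc
  have hF' := fun l => fourierCoeff_liftIoc c F hFs l
  have hH' := fun l => fourierCoeff_liftIoc c H hHs l
  have hIF : ∀ l : ℤ, (∫ t : ℝ, F t * Complex.exp (2 * (Real.pi : ℂ) * Complex.I * (-l : ℤ) * t / T))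
      = (T : ℂ) * fourierCoeff (AddCircle.liftIoc T c F) l := by
    intro l; rw [hF' l]; field_simp
  have hIH : ∀ l : ℤ, (∫ t : ℝ, H t * Complex.exp (2 * (Real.pi : ℂ) * Complex.I * (-l : ℤ) * t / T))
      = (T : ℂ) * fourierCoeff (AddCircle.liftIoc T c H) l := by
    intro l; rw [hH' l]; field_simp
  calc ∑' l : ℤ, (∫ t : ℝ, F t * Complex.exp (2 * (Real.pi : ℂ) * Complex.I * (-l : ℤ) * t / T)) *
        (starRingEnd ℂ) (∫ t : ℝ, H t * Complex.exp (2 * (Real.pi : ℂ) * Complex.I * (-l : ℤ) * t / T))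
      = ∑' l : ℤ, ((T : ℂ) * (T : ℂ)) * ((starRingEnd ℂ) (fourierCoeff (AddCircle.liftIoc T c H) l) *
          fourierCoeff (AddCircle.liftIoc T c F) l) := by
        refine tsum_congr (fun l => ?_)
        rw [hIF l, hIH l, map_mul, Complex.conj_ofReal]
        ring
    _ = ((T : ℂ) * (T : ℂ)) * ∑' l : ℤ, (starRingEnd ℂ) (fourierCoeff (AddCircle.liftIoc T c H) l) *
          fourierCoeff (AddCircle.liftIoc T c F) l := tsum_mul_left
    _ = (T : ℂ) * ∫ t : ℝ, F t * (starRingEnd ℂ) (H t) := by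
        rw [key]
        field_simp

section Aux

lemma ae_facts (b : ℤ → ℝ) (bL bU : ℝ) (hbL : 0 < bL) (hb : ∀ k, b k ∈ Set.Icc bL bU)
    (g : ℤ → ℝ → ℂ) (A B : ℝ) (hA : 0 < A)
    (hAB : ∀ᵐ t : ℝ, A ≤ G0r b g t ∧ G0r b g t ≤ B) :
    ∀ᵐ t : ℝ, Summable (fun k : ℤ => (b k)⁻¹ * ‖g k t‖ ^ 2) ∧
      (∀ k : ℤ, (b k)⁻¹ * ‖g k t‖ ^ 2 ≤ B) ∧ A ≤ G0r b g t ∧ G0r b g t ≤ B := by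
  filter_upwards [hAB] with t ht
  have hs : Summable (fun k : ℤ => (b k)⁻¹ * ‖g k t‖ ^ 2) := by
    by_contra hns
    have : G0r b g t = 0 := tsum_eq_zero_of_not_summable hns
    rw [this] at ht
    linarith [ht.1]
  refine ⟨hs, fun k => ?_, ht⟩
  calc (b k)⁻¹ * ‖g k t‖ ^ 2 ≤ G0r b g t :=
        Summable.le_tsum hs k (fun j _ => mul_nonneg
          (inv_nonneg.mpr (le_of_lt (lt_of_lt_of_le hbL (hb j).1))) (by positivity))
    _ ≤ B := ht.2

lemma gk_bound (b : ℤ → ℝ) (bL bU : ℝ) (hbL : 0 < bL) (hb : ∀ k, b k ∈ Set.Icc bL bU)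
    (g : ℤ → ℝ → ℂ) (A B : ℝ) (hA : 0 < A)
    (hAB : ∀ᵐ t : ℝ, A ≤ G0r b g t ∧ G0r b g t ≤ B) (k : ℤ) :
    ∀ᵐ t : ℝ, ‖g k t‖ ≤ Real.sqrt (B * bU) := by
  filter_upwards [ae_facts b bL bU hbL hb g A B hA hAB] with t ht
  have hbk : 0 < b k := lt_of_lt_of_le hbL (hb k).1
  have h1 : (b k)⁻¹ * ‖g k t‖ ^ 2 ≤ B := ht.2.1 k
  have hB : 0 ≤ B := le_trans (by positivity) h1
  have h2 : ‖g k t‖ ^ 2 ≤ B * bU := by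
    have : ‖g k t‖ ^ 2 ≤ B * b k := by
      rw [inv_mul_le_iff₀ hbk] at h1 <;> linarith [h1]
    nlinarith [(hb k).2, hbk]
  calc ‖g k t‖ = Real.sqrt (‖g k t‖ ^ 2) := (Real.sqrt_sq (norm_nonneg _)).symm
    _ ≤ Real.sqrt (B * bU) := Real.sqrt_le_sqrt h2

lemma pair_integrable (x h : L2) :
    Integrable (fun t : ℝ => (x : ℝ → ℂ) t * (starRingEnd ℂ) ((h : ℝ → ℂ) t))
      (volume : Measure ℝ) := by
  have := MeasureTheory.L2.integrable_inner (𝕜 := ℂ) h x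
  refine this.congr (Filter.Eventually.of_forall fun t => ?_)
  simp [RCLike.inner_apply, mul_comm]

lemma inner_sum_k (b : ℤ → ℝ) (bL bU : ℝ) (hbL : 0 < bL) (hb : ∀ k, b k ∈ Set.Icc bL bU)
    (g : ℤ → ℝ → ℂ) (hmeas : ∀ k, Measurable (g k))
    (hsupp : ∀ k, ∃ c : ℝ, Function.support (g k) ⊆ Set.Icc c (c + (b k)⁻¹))
    (A B : ℝ) (hA : 0 < A)
    (hAB : ∀ᵐ t : ℝ, A ≤ G0r b g t ∧ G0r b g t ≤ B)
    (f h : L2) (k : ℤ) :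
    ∑' l : ℤ, pairL2 f (atom b g k l) * (starRingEnd ℂ) (pairL2 h (atom b g k l)) =
      (((b k)⁻¹ : ℝ) : ℂ) * ∫ t : ℝ, (f : ℝ → ℂ) t * (starRingEnd ℂ) ((h : ℝ → ℂ) t) *
        ((‖g k t‖ ^ 2 : ℝ) : ℂ) := by
  obtain ⟨c, hc⟩ := hsupp k
  have hbk : 0 < b k := lt_of_lt_of_le hbL (hb k).1
  set T : ℝ := (b k)⁻¹ with hTdef
  have hT : 0 < T := by positivity
  have hg0 : ∀ t, t ∉ Icc c (c + T) → g k t = 0 := by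
    intro t ht
    by_contra hne
    exact ht (hc hne)
  have hgbd := gk_bound b bL bU hbL hb g A B hA hAB k
  set F : ℝ → ℂ := (Ioc c (c + T)).indicator
    (fun t => (f : ℝ → ℂ) t * (starRingEnd ℂ) (g k t)) with hFdef
  set H : ℝ → ℂ := (Ioc c (c + T)).indicator
    (fun t => (h : ℝ → ℂ) t * (starRingEnd ℂ) (g k t)) with hHdef
  have hconjg : StronglyMeasurable (fun t => (starRingEnd ℂ) (g k t)) :=
    (continuous_star.measurable.comp (hmeas k)).stronglyMeasurable
  have hFm : StronglyMeasurable F :=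
    ((Lp.stronglyMeasurable f).mul hconjg).indicator measurableSet_Ioc
  have hHm : StronglyMeasurable H :=
    ((Lp.stronglyMeasurable h).mul hconjg).indicator measurableSet_Ioc
  have hmem2 : ∀ (x : L2), MemLp ((Ioc c (c + T)).indicator
      (fun t => (x : ℝ → ℂ) t * (starRingEnd ℂ) (g k t))) 2 (volume : Measure ℝ) := by
    intro x
    refine MemLp.of_le_mul (Lp.memLp x)
      (((Lp.stronglyMeasurable x).mul hconjg).indicator measurableSet_Ioc).aestronglyMeasurable
      (c := Real.sqrt (B * bU)) ?_
    filter_upwards [gk_bound b bL bU hbL hb g A B hA hAB k] with t ht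
    calc ‖(Ioc c (c + T)).indicator (fun t => (x : ℝ → ℂ) t * (starRingEnd ℂ) (g k t)) t‖
        ≤ ‖(x : ℝ → ℂ) t * (starRingEnd ℂ) (g k t)‖ := norm_indicator_le_norm_self _ _
      _ = ‖(x : ℝ → ℂ) t‖ * ‖g k t‖ := by rw [norm_mul, RCLike.norm_conj]
      _ ≤ ‖(x : ℝ → ℂ) t‖ * Real.sqrt (B * bU) :=
          mul_le_mul_of_nonneg_left ht (norm_nonneg _)
      _ = Real.sqrt (B * bU) * ‖(x : ℝ → ℂ) t‖ := mul_comm _ _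
  have hF2 : MemLp F 2 (volume : Measure ℝ) := hmem2 f
  have hH2 : MemLp H 2 (volume : Measure ℝ) := hmem2 h
  have hae : ∀ (x : L2), (Ioc c (c + T)).indicator
      (fun t => (x : ℝ → ℂ) t * (starRingEnd ℂ) (g k t))
      =ᵐ[volume] fun t => (x : ℝ → ℂ) t * (starRingEnd ℂ) (g k t) := by
    intro x
    have hsub : {t : ℝ | ¬ ((Ioc c (c + T)).indicator
        (fun t => (x : ℝ → ℂ) t * (starRingEnd ℂ) (g k t)) t
        = (x : ℝ → ℂ) t * (starRingEnd ℂ) (g k t))} ⊆ {c} := by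
      intro t ht
      simp only [mem_setOf_eq] at ht
      by_cases h1 : t ∈ Ioc c (c + T)
      · exact absurd (indicator_of_mem h1 _) ht
      · rw [indicator_of_notMem h1] at ht
        by_cases h2 : t ∈ Icc c (c + T)
        · rcases h2 with ⟨h2a, h2b⟩
          simp only [mem_Ioc, not_and, not_le] at h1
          have : t = c := by
            by_contra hcon
            have h1' := h1 (lt_of_le_of_ne h2a (Ne.symm hcon))
            linarith
          simp [this]
        · rw [hg0 t h2, map_zero, mul_zero] at ht
          exact absurd rfl ht
    rw [Filter.EventuallyEq, ae_iff]
    exact measure_mono_null hsub (measure_singleton c)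
  -- express the pairing as a Fourier-type integral
  have hexp : ∀ (l : ℤ) (t : ℝ),
      (starRingEnd ℂ) (Complex.exp (2 * (Real.pi : ℂ) * Complex.I * (b k : ℂ) * (l : ℂ) * (t : ℂ)))
      = Complex.exp (2 * (Real.pi : ℂ) * Complex.I * ((-l : ℤ) : ℂ) * (t : ℂ) / (T : ℂ)) := by
    intro l t
    rw [← Complex.exp_conj]
    congr 1
    have hbkne : (b k : ℂ) ≠ 0 := by exact_mod_cast hbk.ne'
    have hTc : (T : ℂ) = ((b k : ℂ))⁻¹ := by rw [hTdef]; push_cast; ring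
    rw [hTc, div_eq_mul_inv, inv_inv]
    simp only [map_mul, Complex.conj_I, Complex.conj_ofReal, map_intCast, map_ofNat]
    push_cast
    ring
  have hpair : ∀ (x : L2) (l : ℤ), pairL2 x (atom b g k l)
      = ∫ t : ℝ, (Ioc c (c + T)).indicator
          (fun t => (x : ℝ → ℂ) t * (starRingEnd ℂ) (g k t)) t *
        Complex.exp (2 * (Real.pi : ℂ) * Complex.I * ((-l : ℤ) : ℂ) * (t : ℂ) / (T : ℂ)) := by
    intro x l
    refine integral_congr_ae ?_
    filter_upwards [hae x] with t ht
    rw [ht]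
    unfold atom
    rw [map_mul, hexp l t]
    ring
  have hpars := parseval_circle hT c F H hFm hHm hF2 hH2
    (fun t ht => indicator_of_notMem ht _) (fun t ht => indicator_of_notMem ht _)
  calc ∑' l : ℤ, pairL2 f (atom b g k l) * (starRingEnd ℂ) (pairL2 h (atom b g k l))
      = ∑' l : ℤ,
        (∫ t : ℝ, F t * Complex.exp (2 * (Real.pi : ℂ) * Complex.I * ((-l : ℤ) : ℂ) * t / T)) *
        (starRingEnd ℂ)
          (∫ t : ℝ, H t * Complex.exp (2 * (Real.pi : ℂ) * Complex.I * ((-l : ℤ) : ℂ) * t / T)) := by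
        refine tsum_congr (fun l => ?_)
        rw [hpair f l, hpair h l]
    _ = (T : ℂ) * ∫ t : ℝ, F t * (starRingEnd ℂ) (H t) := hpars
    _ = (((b k)⁻¹ : ℝ) : ℂ) * ∫ t : ℝ, (f : ℝ → ℂ) t * (starRingEnd ℂ) ((h : ℝ → ℂ) t) *
        ((‖g k t‖ ^ 2 : ℝ) : ℂ) := by
        congr 1
        refine integral_congr_ae ?_
        filter_upwards [hae f, hae h] with t h1 h2
        simp only [hFdef, hHdef]
        rw [h1, h2, map_mul, Complex.conj_conj]
        have hg2 : ((‖g k t‖ ^ 2 : ℝ) : ℂ) = g k t * (starRingEnd ℂ) (g k t) := by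
          rw [Complex.mul_conj]
          norm_cast
          rw [Complex.sq_norm]
        rw [hg2]
        ring

end Aux



lemma walnut (b : ℤ → ℝ) (bL bU : ℝ) (hbL : 0 < bL) (hb : ∀ k, b k ∈ Set.Icc bL bU)
    (g : ℤ → ℝ → ℂ) (hmeas : ∀ k, Measurable (g k))
    (hsupp : ∀ k, ∃ c : ℝ, Function.support (g k) ⊆ Set.Icc c (c + (b k)⁻¹))
    (A B : ℝ) (hA : 0 < A)
    (hAB : ∀ᵐ t : ℝ, A ≤ G0r b g t ∧ G0r b g t ≤ B)
    (f h : L2) :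
    ∑' k : ℤ, ∑' l : ℤ, pairL2 f (atom b g k l) * (starRingEnd ℂ) (pairL2 h (atom b g k l)) =
      ∫ t : ℝ, (f : ℝ → ℂ) t * (starRingEnd ℂ) ((h : ℝ → ℂ) t) * ((G0r b g t : ℝ) : ℂ) := by
  have hstep : ∀ k : ℤ,
      ∑' l : ℤ, pairL2 f (atom b g k l) * (starRingEnd ℂ) (pairL2 h (atom b g k l)) =
      ∫ t : ℝ, (f : ℝ → ℂ) t * (starRingEnd ℂ) ((h : ℝ → ℂ) t) *
        (((b k)⁻¹ * ‖g k t‖ ^ 2 : ℝ) : ℂ) :=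
    fun k => by
      rw [inner_sum_k b bL bU hbL hb g hmeas hsupp A B hA hAB f h k, ← integral_const_mul]
      refine integral_congr_ae (Filter.Eventually.of_forall fun t => ?_)
      push_cast
      ring
  rw [tsum_congr hstep]
  set Φ : ℝ → ℂ := fun t => (f : ℝ → ℂ) t * (starRingEnd ℂ) ((h : ℝ → ℂ) t) with hΦ
  have hΦint : Integrable Φ (volume : Measure ℝ) := pair_integrable f h
  set ψ : ℤ → ℝ → ℂ := fun k t => Φ t * (((b k)⁻¹ * ‖g k t‖ ^ 2 : ℝ) : ℂ) with hψ
  have hψm : ∀ k : ℤ, AEStronglyMeasurable (ψ k) (volume : Measure ℝ) := by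
    intro k
    refine hΦint.aestronglyMeasurable.mul ?_
    refine (Measurable.aestronglyMeasurable ?_)
    exact Complex.measurable_ofReal.comp
      (measurable_const.mul (((hmeas k).norm).pow_const 2))
  have hψbound : ∀ t : ℝ, ∑' k : ℤ, (‖ψ k t‖₊ : ℝ≥0∞)
      = (‖Φ t‖₊ : ℝ≥0∞) * ∑' k : ℤ, ENNReal.ofReal ((b k)⁻¹ * ‖g k t‖ ^ 2) := by
    intro t
    rw [← ENNReal.tsum_mul_left]
    refine tsum_congr (fun k => ?_)
    have hterm : (0 : ℝ) ≤ (b k)⁻¹ * ‖g k t‖ ^ 2 := by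
      have hbk : 0 < b k := lt_of_lt_of_le hbL (hb k).1
      positivity
    rw [hψ]
    simp only [nnnorm_mul, ENNReal.coe_mul]
    congr 1
    rw [← Real.enorm_eq_ofReal hterm]
    congr 1
    ext
    simp [Complex.norm_real]
  have hG0e : ∀ᵐ t : ℝ, ∑' k : ℤ, ENNReal.ofReal ((b k)⁻¹ * ‖g k t‖ ^ 2)
      ≤ ENNReal.ofReal B := by
    filter_upwards [ae_facts b bL bU hbL hb g A B hA hAB] with t ht
    have hnn : ∀ k : ℤ, 0 ≤ (b k)⁻¹ * ‖g k t‖ ^ 2 := by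
      intro k
      have hbk : 0 < b k := lt_of_lt_of_le hbL (hb k).1
      positivity
    rw [← ENNReal.ofReal_tsum_of_nonneg hnn ht.1]
    exact ENNReal.ofReal_le_ofReal ht.2.2.2
  have hlint : ∑' k : ℤ, ∫⁻ t : ℝ, (‖ψ k t‖₊ : ℝ≥0∞) ≠ ∞ := by
    rw [← MeasureTheory.lintegral_tsum (f := fun k t => (‖ψ k t‖₊ : ℝ≥0∞)) (fun k => (hψm k).enorm)]
    have hle : ∫⁻ t : ℝ, ∑' k : ℤ, (‖ψ k t‖₊ : ℝ≥0∞)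
        ≤ ENNReal.ofReal B * ∫⁻ t : ℝ, (‖Φ t‖₊ : ℝ≥0∞) := by
      rw [← MeasureTheory.lintegral_const_mul' _ _ ENNReal.ofReal_ne_top]
      refine MeasureTheory.lintegral_mono_ae ?_
      filter_upwards [hG0e] with t ht
      rw [hψbound t]
      calc (‖Φ t‖₊ : ℝ≥0∞) * ∑' k : ℤ, ENNReal.ofReal ((b k)⁻¹ * ‖g k t‖ ^ 2)
          ≤ (‖Φ t‖₊ : ℝ≥0∞) * ENNReal.ofReal B := by gcongr
        _ = ENNReal.ofReal B * (‖Φ t‖₊ : ℝ≥0∞) := mul_comm _ _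
    refine ne_of_lt (lt_of_le_of_lt hle ?_)
    exact ENNReal.mul_lt_top ENNReal.ofReal_lt_top hΦint.2
  calc ∑' k : ℤ, ∫ t : ℝ, (f : ℝ → ℂ) t * (starRingEnd ℂ) ((h : ℝ → ℂ) t) *
        (((b k)⁻¹ * ‖g k t‖ ^ 2 : ℝ) : ℂ)
      = ∑' k : ℤ, ∫ t : ℝ, ψ k t := rfl
    _ = ∫ t : ℝ, ∑' k : ℤ, ψ k t := (MeasureTheory.integral_tsum hψm hlint).symm
    _ = ∫ t : ℝ, (f : ℝ → ℂ) t * (starRingEnd ℂ) ((h : ℝ → ℂ) t) * ((G0r b g t : ℝ) : ℂ) := by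
        refine integral_congr_ae (Filter.Eventually.of_forall fun t => ?_)
        rw [hψ]
        simp only
        rw [tsum_mul_left, G0r, Complex.ofReal_tsum]

/-- in the painless case, the canonical dual frame elements are
`S⁻¹ g_{k,l} = M_{l b_k} ((G^{g,g}_0)⁻¹ g_k)`, i.e. the canonical dual of a painless NSG
frame is again an NSG frame with windows `(G^{g,g}_0)⁻¹ g_k`. -/
theorem stmt15 (b : ℤ → ℝ) (bL bU : ℝ) (hbL : 0 < bL) (hb : ∀ k, b k ∈ Set.Icc bL bU)
    (g : ℤ → ℝ → ℂ) (hmeas : ∀ k, Measurable (g k)) (hcpt : ∀ k, HasCompactSupport (g k))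
    (hsupp : ∀ k, ∃ c : ℝ, Function.support (g k) ⊆ Set.Icc c (c + (b k)⁻¹))
    (A B : ℝ) (hA : 0 < A)
    (hAB : ∀ᵐ t : ℝ, A ≤ G0r b g t ∧ G0r b g t ≤ B)
    (hmem : ∀ k l : ℤ, MemLp (atom b g k l) 2 (volume : Measure ℝ))
    (S Sinv : L2 →L[ℂ] L2) (hS : IsMixedFrameOp b g g S)
    (hinv1 : Sinv.comp S = ContinuousLinearMap.id ℂ L2)
    (hinv2 : S.comp Sinv = ContinuousLinearMap.id ℂ L2) :
    ∀ k l : ℤ, ∀ᵐ t : ℝ, (Sinv ((hmem k l).toLp (atom b g k l)) : ℝ → ℂ) t =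
      Complex.exp (2 * (Real.pi : ℂ) * Complex.I * (b k : ℂ) * (l : ℂ) * (t : ℂ)) *
        (((G0r b g t : ℝ) : ℂ))⁻¹ * g k t := by
  intro k l
  have hbk : 0 < b k := lt_of_lt_of_le hbL (hb k).1
  have hgk : MemLp (g k) 2 (volume : Measure ℝ) := by
    have h0 := hmem k 0
    have ha : atom b g k 0 = g k := by
      funext t; simp [atom]
    rwa [ha] at h0
  have hfacts := ae_facts b bL bU hbL hb g A B hA hAB
  -- `G0r` is a.e. measurable
  have hG0m : AEMeasurable (G0r b g) (volume : Measure ℝ) := by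
    have hmeasE : Measurable (fun t : ℝ =>
        (∑' j : ℤ, ENNReal.ofReal ((b j)⁻¹ * ‖g j t‖ ^ 2)).toReal) :=
      (Measurable.ennreal_tsum (fun j => ENNReal.measurable_ofReal.comp
        (measurable_const.mul (((hmeas j).norm).pow_const 2)))).ennreal_toReal
    refine ⟨_, hmeasE, ?_⟩
    filter_upwards [hfacts] with t ht
    have hnn : ∀ j : ℤ, 0 ≤ (b j)⁻¹ * ‖g j t‖ ^ 2 := by
      intro j
      have : 0 < b j := lt_of_lt_of_le hbL (hb j).1
      positivity
    have h0 : 0 ≤ G0r b g t := le_trans hA.le ht.2.2.1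
    rw [← ENNReal.ofReal_tsum_of_nonneg hnn ht.1, ENNReal.toReal_ofReal]
    · rfl
    · exact h0
  -- the dual window
  set γ : ℝ → ℂ := fun t => Complex.exp
      (2 * (Real.pi : ℂ) * Complex.I * (b k : ℂ) * (l : ℂ) * (t : ℂ)) *
      (((G0r b g t : ℝ) : ℂ))⁻¹ * g k t with hγ
  have hexp1 : ∀ t : ℝ,
      ‖Complex.exp (2 * (Real.pi : ℂ) * Complex.I * (b k : ℂ) * (l : ℂ) * (t : ℂ))‖ = 1 := by
    intro t
    have harg : (2 * (Real.pi : ℂ) * Complex.I * (b k : ℂ) * (l : ℂ) * (t : ℂ))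
        = ((2 * Real.pi * b k * (l : ℝ) * t : ℝ) : ℂ) * Complex.I := by
      push_cast; ring
    rw [harg, Complex.norm_exp_ofReal_mul_I]
  have hexpm : Measurable (fun t : ℝ =>
      Complex.exp (2 * (Real.pi : ℂ) * Complex.I * (b k : ℂ) * (l : ℂ) * (t : ℂ))) :=
    Complex.measurable_exp.comp (measurable_const.mul Complex.measurable_ofReal)
  have hγm : AEStronglyMeasurable γ (volume : Measure ℝ) := by
    have h2 : AEMeasurable (fun t : ℝ => (((G0r b g t : ℝ) : ℂ))⁻¹) (volume : Measure ℝ) :=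
      (Complex.measurable_ofReal.comp_aemeasurable hG0m).inv
    exact ((hexpm.aemeasurable.mul h2).mul (hmeas k).aemeasurable).aestronglyMeasurable
  have hγ2 : MemLp γ 2 (volume : Measure ℝ) := by
    refine MemLp.of_le_mul hgk hγm (c := A⁻¹) ?_
    filter_upwards [hfacts] with t ht
    have hApos : 0 < G0r b g t := lt_of_lt_of_le hA ht.2.2.1
    have hinv : ‖(((G0r b g t : ℝ) : ℂ))⁻¹‖ ≤ A⁻¹ := by
      rw [norm_inv, Complex.norm_real, Real.norm_eq_abs, abs_of_pos hApos]
      exact inv_anti₀ hA ht.2.2.1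
    calc ‖γ t‖ = ‖Complex.exp (2 * (Real.pi : ℂ) * Complex.I * (b k : ℂ) * (l : ℂ) * (t : ℂ))‖ *
          ‖(((G0r b g t : ℝ) : ℂ))⁻¹‖ * ‖g k t‖ := by
          rw [hγ]; simp [norm_mul]
      _ = ‖(((G0r b g t : ℝ) : ℂ))⁻¹‖ * ‖g k t‖ := by rw [hexp1 t, one_mul]
      _ ≤ A⁻¹ * ‖g k t‖ :=
          mul_le_mul_of_nonneg_right hinv (norm_nonneg _)
  set γL : L2 := hγ2.toLp γ with hγL
  set aL : L2 := (hmem k l).toLp (atom b g k l) with haLdef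
  have hγLae : (γL : ℝ → ℂ) =ᵐ[volume] γ := hγ2.coeFn_toLp
  have haLae : (aL : ℝ → ℂ) =ᵐ[volume] atom b g k l := (hmem k l).coeFn_toLp
  have hkey : ∀ x : L2, pairL2 (S γL) (x : ℝ → ℂ) = pairL2 aL (x : ℝ → ℂ) := by
    intro x
    rw [hS γL x, walnut b bL bU hbL hb g hmeas hsupp A B hA hAB γL x]
    unfold pairL2
    refine integral_congr_ae ?_
    filter_upwards [hγLae, haLae, hfacts] with t h1 h2 h3
    rw [h1, h2]
    have hne : (((G0r b g t : ℝ) : ℂ)) ≠ 0 :=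
      Complex.ofReal_ne_zero.mpr (ne_of_gt (lt_of_lt_of_le hA h3.2.2.1))
    rw [hγ]
    unfold atom
    field_simp
  have hdiff : S γL = aL := by
    have hsub : ((S γL - aL : L2) : ℝ → ℂ)
        =ᵐ[volume] (S γL : ℝ → ℂ) - (aL : ℝ → ℂ) := Lp.coeFn_sub _ _
    have h0 : pairL2 (S γL - aL) ((S γL - aL : L2) : ℝ → ℂ) = 0 := by
      have hint1 := pair_integrable (S γL) (S γL - aL)
      have hint2 := pair_integrable aL (S γL - aL)
      have hsplit : pairL2 (S γL - aL) ((S γL - aL : L2) : ℝ → ℂ)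
          = pairL2 (S γL) ((S γL - aL : L2) : ℝ → ℂ)
            - pairL2 aL ((S γL - aL : L2) : ℝ → ℂ) := by
        unfold pairL2
        rw [← integral_sub hint1 hint2]
        refine integral_congr_ae ?_
        filter_upwards [hsub] with t ht
        rw [ht, Pi.sub_apply]
        ring
      rw [hsplit, hkey (S γL - aL)]
      ring
    have hinner0 : (inner ℂ (S γL - aL) (S γL - aL) : ℂ) = 0 := by
      calc (inner ℂ (S γL - aL) (S γL - aL) : ℂ)
          = ∫ t : ℝ, (starRingEnd ℂ) (((S γL - aL : L2) : ℝ → ℂ) t) *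
              ((S γL - aL : L2) : ℝ → ℂ) t := by
            rw [MeasureTheory.L2.inner_def]
            refine integral_congr_ae (Filter.Eventually.of_forall fun t => ?_)
            simp only [RCLike.inner_apply]
            ring
        _ = pairL2 (S γL - aL) ((S γL - aL : L2) : ℝ → ℂ) :=
            integral_congr_ae (Filter.Eventually.of_forall fun t => mul_comm _ _)
        _ = 0 := h0
    exact sub_eq_zero.mp (inner_self_eq_zero.mp hinner0)
  have hSinv : Sinv aL = γL := by
    rw [← hdiff, ← ContinuousLinearMap.comp_apply, hinv1, ContinuousLinearMap.id_apply]
  rw [hSinv]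
  filter_upwards [hγLae] with t ht
  rw [ht]
end
end

section
/- For an almost painless NSG system, R_{g,g} ≤ R_{g^o,g^r} + R_{g^r,g^o} + ess sup Σ_{l∈ℤ} G^{g^r,g^r}_l, where g = g^o + g^r with g^o_k and g^r_k having disjoint supports and |supp g^o_k| ≤ 1/b_k. -/
open MeasureTheory Complex Filter Set Function
open scoped ENNReal Real NNReal ComplexInnerProductSpace

noncomputable section

/-- if `g = g^o + g^r` with `g^o_k` and `g^r_k` having disjoint supports and
`supp g^o_k` contained in an interval of length `1/b_k`, then
`R_{g,g} ≤ R_{g^o,g^r} + R_{g^r,g^o} + ess sup Σ_l G^{g^r,g^r}_l`. -/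
theorem stmt18 (b : ℤ → ℝ) (bL bU : ℝ) (hbL : 0 < bL) (hb : ∀ k, b k ∈ Set.Icc bL bU)
    (go gr : ℤ → ℝ → ℂ)
    (hsupp : ∀ k, ∃ c : ℝ, Function.support (go k) ⊆ Set.Icc c (c + (b k)⁻¹))
    (hdisj : ∀ k, Disjoint (Function.support (go k)) (Function.support (gr k))) :
    Roff b (fun k t => go k t + gr k t) (fun k t => go k t + gr k t) ≤
      Roff b go gr + Roff b gr go +
        essSup (fun t => ∑' l : ℤ, corr b gr gr l t) volume := by
  classical
  have hb0 : ∀ k, 0 < b k := fun k => lt_of_lt_of_le hbL (hb k).1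
  set c : ℤ → ℝ := fun k => (hsupp k).choose with hc
  have hcs : ∀ k, Function.support (go k) ⊆ Set.Icc (c k) (c k + (b k)⁻¹) :=
    fun k => (hsupp k).choose_spec
  set N : Set ℝ := ⋃ k : ℤ, ({c k, c k + (b k)⁻¹} : Set ℝ) with hNdef
  have hN : volume N = 0 :=
    measure_iUnion_null fun k =>
      ((Set.finite_singleton _).insert _).countable.measure_zero _
  -- vanishing of the go-go terms off N
  have hzero : ∀ t ∉ N, ∀ l : ℤ, l ≠ 0 → ∀ k : ℤ,
      go k (t - (l : ℝ) / b k) = 0 ∨ go k t = 0 := by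
    intro t htN l hl k
    by_contra h
    push_neg at h
    obtain ⟨h1, h2⟩ := h
    have m1 := hcs k h1
    have m2 := hcs k h2
    have hbk := hb0 k
    have htMem : t ∈ ({c k, c k + (b k)⁻¹} : Set ℝ) := by
      rcases lt_or_gt_of_ne hl with hneg | hpos
      · -- l ≤ -1 : t = c k
        have hl1 : (l : ℝ) ≤ -1 := by
          have : l ≤ -1 := by omega
          exact_mod_cast this
        have : t ≤ c k := by
          have hm := m1.2
          have hdiv : (l : ℝ) / b k ≤ -(b k)⁻¹ := by
            rw [div_le_iff₀ hbk, neg_mul, inv_mul_cancel₀ hbk.ne']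
            exact hl1
          linarith
        left; show t = _; linarith [m2.1]
      · -- l ≥ 1 : t = c k + (b k)⁻¹
        have hl1 : (1 : ℝ) ≤ (l : ℝ) := by exact_mod_cast hpos
        have : c k + (b k)⁻¹ ≤ t := by
          have hm := m1.1
          have hdiv : (b k)⁻¹ ≤ (l : ℝ) / b k := by
            rw [le_div_iff₀ hbk, inv_mul_cancel₀ hbk.ne']
            exact hl1
          linarith
        right; show t = _; linarith [m2.2]
    exact htN (Set.mem_iUnion.mpr ⟨k, htMem⟩)
  -- pointwise bound
  have key : ∀ t ∉ N,
      (∑' l : {l : ℤ // l ≠ 0}, corr b (fun k t => go k t + gr k t)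
          (fun k t => go k t + gr k t) (l : ℤ) t) ≤
        (∑' l : {l : ℤ // l ≠ 0}, corr b go gr (l : ℤ) t) +
        (∑' l : {l : ℤ // l ≠ 0}, corr b gr go (l : ℤ) t) +
        (∑' l : ℤ, corr b gr gr l t) := by
    intro t htN
    have step1 : ∀ l : ℤ, l ≠ 0 →
        corr b (fun k t => go k t + gr k t) (fun k t => go k t + gr k t) l t ≤
          corr b go gr l t + corr b gr go l t + corr b gr gr l t := by
      intro l hl
      unfold corr
      rw [← ENNReal.tsum_add, ← ENNReal.tsum_add]
      refine ENNReal.tsum_le_tsum fun k => ?_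
      set a1 : ℝ≥0∞ := (‖go k (t - (l : ℝ) / b k)‖₊ : ℝ≥0∞)
      set a2 : ℝ≥0∞ := (‖gr k (t - (l : ℝ) / b k)‖₊ : ℝ≥0∞)
      set v1 : ℝ≥0∞ := (‖go k t‖₊ : ℝ≥0∞)
      set v2 : ℝ≥0∞ := (‖gr k t‖₊ : ℝ≥0∞)
      have hz : a1 * v1 = 0 := by
        rcases hzero t htN l hl k with h | h
        · simp [a1, h]
        · simp [v1, h]
      have hnorm1 : (‖go k (t - (l : ℝ) / b k) + gr k (t - (l : ℝ) / b k)‖₊ : ℝ≥0∞) ≤ a1 + a2 := by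
        simp only [a1, a2, ← ENNReal.coe_add]
        exact_mod_cast nnnorm_add_le _ _
      have hnorm2 : (‖go k t + gr k t‖₊ : ℝ≥0∞) ≤ v1 + v2 := by
        simp only [v1, v2, ← ENNReal.coe_add]
        exact_mod_cast nnnorm_add_le _ _
      calc ENNReal.ofReal ((b k)⁻¹) * (‖go k (t - (l:ℝ)/b k) + gr k (t - (l:ℝ)/b k)‖₊ : ℝ≥0∞) *
              (‖go k t + gr k t‖₊ : ℝ≥0∞)
          ≤ ENNReal.ofReal ((b k)⁻¹) * (a1 + a2) * (v1 + v2) := by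
            gcongr
        _ = ENNReal.ofReal ((b k)⁻¹) * (a1 * v1 + a1 * v2 + a2 * v1 + a2 * v2) := by ring
        _ = ENNReal.ofReal ((b k)⁻¹) * a1 * v2 + ENNReal.ofReal ((b k)⁻¹) * a2 * v1 +
              ENNReal.ofReal ((b k)⁻¹) * a2 * v2 := by rw [hz]; ring
    calc (∑' l : {l : ℤ // l ≠ 0}, corr b (fun k t => go k t + gr k t)
            (fun k t => go k t + gr k t) (l : ℤ) t)
        ≤ ∑' l : {l : ℤ // l ≠ 0},
            (corr b go gr (l : ℤ) t + corr b gr go (l : ℤ) t + corr b gr gr (l : ℤ) t) :=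
          ENNReal.tsum_le_tsum fun l => step1 l l.2
      _ = (∑' l : {l : ℤ // l ≠ 0}, corr b go gr (l : ℤ) t) +
            (∑' l : {l : ℤ // l ≠ 0}, corr b gr go (l : ℤ) t) +
            (∑' l : {l : ℤ // l ≠ 0}, corr b gr gr (l : ℤ) t) := by
          rw [ENNReal.tsum_add, ENNReal.tsum_add]
      _ ≤ (∑' l : {l : ℤ // l ≠ 0}, corr b go gr (l : ℤ) t) +
            (∑' l : {l : ℤ // l ≠ 0}, corr b gr go (l : ℤ) t) +
            (∑' l : ℤ, corr b gr gr l t) := by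
          gcongr
          exact ENNReal.tsum_comp_le_tsum_of_injective Subtype.val_injective _
  -- combine via essSup
  have h0 : ∀ᵐ t : ℝ, t ∉ N := measure_eq_zero_iff_ae_notMem.mp hN
  have h1 := ENNReal.ae_le_essSup (μ := (volume : Measure ℝ))
    (fun t => ∑' l : {l : ℤ // l ≠ 0}, corr b go gr (l : ℤ) t)
  have h2 := ENNReal.ae_le_essSup (μ := (volume : Measure ℝ))
    (fun t => ∑' l : {l : ℤ // l ≠ 0}, corr b gr go (l : ℤ) t)
  have h3 := ENNReal.ae_le_essSup (μ := (volume : Measure ℝ))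
    (fun t => ∑' l : ℤ, corr b gr gr l t)
  refine essSup_le_of_ae_le _ ?_
  filter_upwards [h0, h1, h2, h3] with t ht0 ht1 ht2 ht3
  calc (∑' l : {l : ℤ // l ≠ 0}, corr b (fun k t => go k t + gr k t)
          (fun k t => go k t + gr k t) (l : ℤ) t)
      ≤ (∑' l : {l : ℤ // l ≠ 0}, corr b go gr (l : ℤ) t) +
        (∑' l : {l : ℤ // l ≠ 0}, corr b gr go (l : ℤ) t) +
        (∑' l : ℤ, corr b gr gr l t) := key t ht0
    _ ≤ Roff b go gr + Roff b gr go +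
          essSup (fun t => ∑' l : ℤ, corr b gr gr l t) volume := by
        exact add_le_add (add_le_add ht1 ht2) ht3
end
end
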